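/- Let C be a k-linear category with length and x, y, z objects. If there is a path of irreducible morphisms from x to y of length ℓ and a path of irreducible morphisms from y to z of length ℓ′, then R^i C(x,z) = 0 for every i > ℓ + ℓ′. -/
import Mathlib


open CategoryTheory

/-- Powers of the ideal `RC` of non-invertible morphisms of `C`. -/
def RPow (C : Type*) [Category C] [Preadditive C] : ℕ → (x y : C) → AddSubgroup (x ⟶ y)
  | 0, _, _ => ⊤
  | n + 1, x, y => AddSubgroup.closure
      { f | ∃ (z : C) (g : x ⟶ z) (h : z ⟶ y),
          g ∈ RPow C n x z ∧ ¬ IsIso h ∧ f = g ≫ h }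

/-- Irreducible morphism of `C` : lies in `RC` but not in `R²C`. -/
def IrredC {C : Type*} [Category C] [Preadditive C] {x y : C} (f : x ⟶ y) : Prop :=
  ¬ IsIso f ∧ f ∉ RPow C 2 x y

/-- `PathLen C n x y` : there is a path of `n` irreducible morphisms from `x` to `y`. -/
inductive PathLen (C : Type*) [Category C] [Preadditive C] : ℕ → C → C → Prop
  | nil (x : C) : PathLen C 0 x x
  | cons {n : ℕ} {x y z : C} : PathLen C n x y → ∀ g : y ⟶ z, IrredC g →
      PathLen C (n + 1) x z

section Aux

variable {C : Type*} [Category C] [Preadditive C]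

lemma RPow_succ_eq (n : ℕ) (x y : C) : RPow C (n + 1) x y = AddSubgroup.closure
    { f | ∃ (z : C) (g : x ⟶ z) (h : z ⟶ y),
        g ∈ RPow C n x z ∧ ¬ IsIso h ∧ f = g ≫ h } := rfl

lemma mem_RPow_succ_of {n : ℕ} {x w y : C} {g : x ⟶ w} {h : w ⟶ y}
    (hg : g ∈ RPow C n x w) (hh : ¬ IsIso h) : g ≫ h ∈ RPow C (n + 1) x y := by
  rw [RPow_succ_eq]
  exact AddSubgroup.subset_closure ⟨w, g, h, hg, hh, rfl⟩

lemma RPow_succ_le (n : ℕ) (x y : C) : RPow C (n + 1) x y ≤ RPow C n x y := by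
  induction n generalizing x y with
  | zero => exact le_top
  | succ n ih =>
    rw [RPow_succ_eq (n + 1)]
    refine (AddSubgroup.closure_le _).2 ?_
    rintro f ⟨w, g, h, hg, hh, rfl⟩
    exact mem_RPow_succ_of (ih x w hg) hh

lemma RPow_le_of_le {m n : ℕ} (hmn : m ≤ n) (x y : C) : RPow C n x y ≤ RPow C m x y := by
  induction n with
  | zero => simpa [Nat.le_zero.1 hmn] using le_refl _
  | succ n ih =>
    rcases Nat.lt_or_ge m (n + 1) with h | h
    · exact (RPow_succ_le n x y).trans (ih (Nat.lt_succ_iff.1 h))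
    · have : m = n + 1 := le_antisymm hmn h
      subst this; exact le_refl _

/-- `RPow` is stable under post-composition by arbitrary morphisms. -/
lemma RPow_comp_right (n : ℕ) {x y z : C} {g : x ⟶ y} (hg : g ∈ RPow C n x y)
    (a : y ⟶ z) : g ≫ a ∈ RPow C n x z := by
  induction n generalizing y z with
  | zero => exact AddSubgroup.mem_top _
  | succ n ih =>
    -- use the additive morphism `f ↦ f ≫ a`
    have key : RPow C (n + 1) x y ≤
        (RPow C (n + 1) x z).comap (AddMonoidHom.mk' (fun f : x ⟶ y => f ≫ a)
          (fun f f' => Preadditive.add_comp _ _ _ f f' a)) := by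
      rw [RPow_succ_eq]
      refine (AddSubgroup.closure_le _).2 ?_
      rintro f ⟨w, b, h, hb, hh, rfl⟩
      simp only [SetLike.mem_coe, AddSubgroup.mem_comap, AddMonoidHom.mk'_apply, Category.assoc]
      by_cases ha : IsIso a
      · have hha : ¬ IsIso (h ≫ a) := by
          intro hi
          exact hh (IsIso.of_isIso_comp_right h a)
        exact mem_RPow_succ_of hb hha
      · have hbh : b ≫ h ∈ RPow C n x y :=
          RPow_succ_le n x y (mem_RPow_succ_of hb hh)
        rw [← Category.assoc]
        exact mem_RPow_succ_of hbh ha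
    exact key hg

/-- `R^m ∘ R^n ⊆ R^(m+n)`. -/
lemma RPow_comp {m : ℕ} (n : ℕ) {x y z : C} {g : x ⟶ y} {h : y ⟶ z}
    (hg : g ∈ RPow C m x y) (hh : h ∈ RPow C n y z) :
    g ≫ h ∈ RPow C (m + n) x z := by
  induction n generalizing z with
  | zero => exact RPow_comp_right m hg h
  | succ n ih =>
    have key : RPow C (n + 1) y z ≤
        (RPow C (m + (n + 1)) x z).comap (AddMonoidHom.mk' (fun f : y ⟶ z => g ≫ f)
          (fun f f' => Preadditive.comp_add _ _ _ g f f')) := by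
      rw [RPow_succ_eq]
      refine (AddSubgroup.closure_le _).2 ?_
      rintro f ⟨w, a, h', ha, hh', rfl⟩
      simp only [SetLike.mem_coe, AddSubgroup.mem_comap, AddMonoidHom.mk'_apply,
        ← Category.assoc]
      exact mem_RPow_succ_of (ih ha) hh'
    exact key hh

/-- A nonzero "gap" between consecutive radical powers forces the existence of a path of
irreducible morphisms of the corresponding length. -/
lemma path_of_gap (hdist : ∀ x y : C, Nonempty (x ≅ y) → x = y)
    (m : ℕ) (x w : C) (g : x ⟶ w) (hg : g ∈ RPow C m x w)
    (hg' : g ∉ RPow C (m + 1) x w) : PathLen C m x w := by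
  induction m generalizing w with
  | zero =>
    have hiso : IsIso g := by
      by_contra hni
      have h1 : 𝟙 x ≫ g ∈ RPow C (0 + 1) x w :=
        mem_RPow_succ_of (show 𝟙 x ∈ RPow C 0 x x from AddSubgroup.mem_top _) hni
      rw [Category.id_comp] at h1
      exact hg' h1
    have e := hdist x w ⟨asIso g⟩
    subst e
    exact PathLen.nil x
  | succ m ih =>
    by_cases Hgood : ∃ (w' : C) (h : w' ⟶ w), IrredC h ∧
        ∃ a : x ⟶ w', a ∈ RPow C m x w' ∧ a ∉ RPow C (m + 1) x w'
    · obtain ⟨w', h, hirr, a, ha, ha'⟩ := Hgood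
      exact PathLen.cons (ih w' a ha ha') h hirr
    · exfalso
      push_neg at Hgood
      apply hg'
      have key : RPow C (m + 1) x w ≤ RPow C (m + 2) x w := by
        rw [RPow_succ_eq m]
        refine (AddSubgroup.closure_le _).2 ?_
        rintro f ⟨w', a, h, ha, hh, rfl⟩
        by_cases h2 : h ∈ RPow C 2 w' w
        · exact RPow_comp 2 ha h2
        · exact mem_RPow_succ_of (Hgood w' h ⟨hh, h2⟩ a ha) hh
      exact key hg

lemma PathLen.comp {m n : ℕ} {x y z : C} (hxy : PathLen C m x y)
    (hyz : PathLen C n y z) : PathLen C (m + n) x z := by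
  induction hyz with
  | nil _ => exact hxy
  | cons _ g hg ih => exact PathLen.cons (ih hxy) g hg

end Aux

/-- In a `k`-linear category with length, if there are paths of
irreducible morphisms `x → y` of length `ℓ` and `y → z` of length `ℓ′`, then
`R^i C(x,z) = 0` for every `i > ℓ + ℓ′`. -/
theorem stmt10 {k : Type*} [Field k] {C : Type*} [Category C] [Preadditive C]
    [CategoryTheory.Linear k C]
    (hfin : ∀ x y : C, FiniteDimensional k (x ⟶ y))
    (hdist : ∀ x y : C, Nonempty (x ≅ y) → x = y)
    (hconst : ∀ (x y : C) (m n : ℕ), PathLen C m x y → PathLen C n x y → m = n)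
    (hsep : ∀ (x y : C) (f : x ⟶ y), (∀ n, f ∈ RPow C n x y) → f = 0)
    (x y z : C) (ℓ ℓ' : ℕ) (hxy : PathLen C ℓ x y) (hyz : PathLen C ℓ' y z) :
    ∀ i, ℓ + ℓ' < i → RPow C i x z = ⊥ := by
  intro i hi
  have hpath : PathLen C (ℓ + ℓ') x z := hxy.comp hyz
  rw [eq_bot_iff]
  intro f hf
  rw [AddSubgroup.mem_bot]
  apply hsep x z f
  by_contra hcon
  push_neg at hcon
  classical
  set n0 := Nat.find hcon with hn0def
  have hn0 : f ∉ RPow C n0 x z := Nat.find_spec hcon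
  have hlt : ∀ m < n0, f ∈ RPow C m x z := fun m hm => by
    by_contra h; exact Nat.find_min hcon hm h
  have hin0 : i < n0 := by
    by_contra h
    push_neg at h
    exact hn0 (RPow_le_of_le h x z hf)
  obtain ⟨m, hm⟩ : ∃ m, n0 = m + 1 := ⟨n0 - 1, by omega⟩
  have hmem : f ∈ RPow C m x z := hlt m (by omega)
  have hnot : f ∉ RPow C (m + 1) x z := hm ▸ hn0
  have hpm : PathLen C m x z := path_of_gap hdist m x z f hmem hnot
  have := hconst x z m (ℓ + ℓ') hpm hpath
  omega
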